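/- Let M and N be closed Riemannian n-manifolds, f : M → N an L-Lipschitz map preserving the volume of measurable sets (vol_N(f(A)) = vol_M(A) for all measurable A), and suppose almost every point of N has at most one preimage. Suppose there is r₀ > 0 such that vol_M(B_r(x)) ≥ (3/4)ωₙrⁿ and vol_N(B_r(y)) ≤ (4/3)ωₙrⁿ for all r ≤ r₀, x ∈ M, y ∈ N. Then every point y ∈ N has at most (16/9)·Lⁿ preimages under f. -/

import Mathlib

/-!
Around k preimages of y take pairwise disjoint balls of a small radius r. Volume
preservation, applied to their union, gives the image of the union volume at least
k · (3/4) ωₙ rⁿ; for every K > L the map is K-Lipschitz, so that image lies in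
B_{Kr}(y), of volume at most (4/3) ωₙ Kⁿ rⁿ. Hence k ≤ (16/9) Kⁿ, and K ↓ L.
-/

open MeasureTheory Metric Set
open scoped ENNReal NNReal

/-- `ω k`: the Lebesgue volume of the `k`-dimensional Euclidean unit ball. -/
noncomputable def unitBallVolume (k : ℕ) : ℝ≥0∞ :=
  volume (Metric.ball (0 : EuclideanSpace ℝ (Fin k)) 1)

open Filter Topology

theorem Set.toENNReal_encard_le_of_forall_finset {α : Type*} {s : Set α} {B : ℝ≥0∞}
    (h : ∀ t : Finset α, ↑t ⊆ s → (t.card : ℝ≥0∞) ≤ B) : (s.encard : ℝ≥0∞) ≤ B := by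
  rcases s.finite_or_infinite with hs | hs
  · simpa [hs.encard_eq_coe_toFinset_card] using h hs.toFinset (by simp)
  · suffices B = ∞ by simp [this]
    refine ENNReal.eq_top_of_forall_nnreal_le fun r => ?_
    obtain ⟨t, hts, htcard⟩ := hs.exists_subset_card_eq ⌈(r : ℝ)⌉₊
    calc (r : ℝ≥0∞) ≤ (⌈(r : ℝ)⌉₊ : ℝ≥0∞) := by exact_mod_cast Nat.le_ceil (r : ℝ)
      _ = t.card := by rw [htcard]
      _ ≤ B := h t hts

theorem Metric.eventually_pairwiseDisjoint_ball {α : Type*} [MetricSpace α] (s : Finset α) :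
    ∀ᶠ r in 𝓝[>] (0 : ℝ), (s : Set α).PairwiseDisjoint (ball · r) := by
  simp only [Set.PairwiseDisjoint, Set.Pairwise, Finset.mem_coe, eventually_all_finset]
  intro a _ b _
  by_cases hab : a = b
  · exact Eventually.of_forall fun _ h => absurd hab h
  have hpos : 0 < dist a b / 2 := half_pos (dist_pos.2 hab)
  filter_upwards [(eventually_lt_nhds hpos).filter_mono nhdsWithin_le_nhds] with r hr _
  exact ball_disjoint_ball (by linarith)

theorem card_mul_le_of_measure_ball_bounds {M N : Type*}
    [MetricSpace M] [MeasurableSpace M] [OpensMeasurableSpace M]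
    [MetricSpace N] [MeasurableSpace N] {μ : Measure M} {ν : Measure N}
    {f : M → N} {K : ℝ≥0} (hK : K ≠ 0) (hf : LipschitzWith K f)
    (hvol : ∀ A : Set M, MeasurableSet A → ν (f '' A) = μ A)
    {n : ℕ} {a b : ℝ≥0∞} {r₀ : ℝ} (hr₀ : 0 < r₀)
    (hμ : ∀ (x : M) (r : ℝ), 0 < r → r ≤ r₀ → a * ENNReal.ofReal (r ^ n) ≤ μ (ball x r))
    (hν : ∀ (y : N) (r : ℝ), 0 < r → r ≤ r₀ → ν (ball y r) ≤ b * ENNReal.ofReal (r ^ n))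
    {y : N} {S : Finset M} (hS : ∀ x ∈ S, f x = y) :
    S.card * a ≤ b * ENNReal.ofReal ((K : ℝ) ^ n) := by
  have hKr : Tendsto (fun r : ℝ => (K : ℝ) * r) (𝓝[>] 0) (𝓝 0) :=
    ((continuous_const_mul (K : ℝ)).tendsto' 0 0 (mul_zero _)).mono_left nhdsWithin_le_nhds
  obtain ⟨r, hr, hrr₀, hKrr₀, hdisj⟩ : ∃ r : ℝ, 0 < r ∧ r ≤ r₀ ∧ (K : ℝ) * r ≤ r₀ ∧
      (S : Set M).PairwiseDisjoint (ball · r) :=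
    (eventually_mem_nhdsWithin.and <|
      ((eventually_le_nhds hr₀).filter_mono nhdsWithin_le_nhds).and <|
      (hKr.eventually (eventually_le_nhds hr₀)).and
        (eventually_pairwiseDisjoint_ball S)).exists
  have himage : f '' ⋃ x ∈ S, ball x r ⊆ ball y (K * r) :=
    image_subset_iff.2 <| iUnion₂_subset fun x hx => hS x hx ▸ (hf.mapsTo_ball hK x r)
  have hrn : ENNReal.ofReal (r ^ n) ≠ 0 := by positivity
  refine (ENNReal.mul_le_mul_iff_left hrn ENNReal.ofReal_ne_top).1 ?_
  calc S.card * a * ENNReal.ofReal (r ^ n) = ∑ _x ∈ S, a * ENNReal.ofReal (r ^ n) := by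
        rw [Finset.sum_const, nsmul_eq_mul, mul_assoc]
    _ ≤ ∑ x ∈ S, μ (ball x r) := Finset.sum_le_sum fun x _ => hμ x r hr hrr₀
    _ = μ (⋃ x ∈ S, ball x r) := (measure_biUnion_finset hdisj fun _ _ => measurableSet_ball).symm
    _ = ν (f '' ⋃ x ∈ S, ball x r) :=
        (hvol _ (S.measurableSet_biUnion fun _ _ => measurableSet_ball)).symm
    _ ≤ ν (ball y (K * r)) := measure_mono himage
    _ ≤ b * ENNReal.ofReal ((K * r) ^ n) := hν y _ (by positivity) hKrr₀
    _ = b * ENNReal.ofReal ((K : ℝ) ^ n) * ENNReal.ofReal (r ^ n) := by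
        rw [mul_pow, ENNReal.ofReal_mul (by positivity), mul_assoc]

theorem unitBallVolume_pos (k : ℕ) : 0 < unitBallVolume k := measure_ball_pos _ _ one_pos

theorem unitBallVolume_lt_top (k : ℕ) : unitBallVolume k < ∞ := measure_ball_lt_top

theorem stmt11_general {M N : Type*}
    [MetricSpace M] [MeasurableSpace M] [BorelSpace M]
    [MetricSpace N] [MeasurableSpace N] [BorelSpace N]
    (n : ℕ)
    (f : M → N) (L : ℝ≥0) (hf : LipschitzWith L f)
    (hvolpres : ∀ A : Set M, MeasurableSet A →
      (μH[n] : Measure N) (f '' A) = (μH[n] : Measure M) A)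
    (r₀ : ℝ) (hr₀ : 0 < r₀)
    (hM : ∀ (x : M) (r : ℝ), 0 < r → r ≤ r₀ →
      (3 / 4 : ℝ≥0∞) * unitBallVolume n * ENNReal.ofReal (r ^ n)
        ≤ (μH[n] : Measure M) (Metric.ball x r))
    (hN : ∀ (y : N) (r : ℝ), 0 < r → r ≤ r₀ →
      (μH[n] : Measure N) (Metric.ball y r)
        ≤ (4 / 3 : ℝ≥0∞) * unitBallVolume n * ENNReal.ofReal (r ^ n)) :
    ∀ y : N, ((f ⁻¹' {y}).encard : ℝ≥0∞) ≤ ENNReal.ofReal (16 / 9 * (L : ℝ) ^ n) := by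
  intro y
  refine Set.toENNReal_encard_le_of_forall_finset fun S hS => ?_
  have hω : 0 < (unitBallVolume n).toReal :=
    ENNReal.toReal_pos (unitBallVolume_pos n).ne' (unitBallVolume_lt_top n).ne
  have hcard (K : ℝ≥0) (hLK : L < K) : (S.card : ℝ) ≤ 16 / 9 * (K : ℝ) ^ n := by
    have h := card_mul_le_of_measure_ball_bounds (pos_of_gt hLK).ne' (hf.weaken hLK.le)
      hvolpres hr₀ hM hN fun x hx => hS hx
    have hfin : 4 / 3 * unitBallVolume n * ENNReal.ofReal ((K : ℝ) ^ n) ≠ ∞ :=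
      ENNReal.mul_ne_top (ENNReal.mul_ne_top (ENNReal.div_ne_top (by simp) (by simp))
        (unitBallVolume_lt_top n).ne) ENNReal.ofReal_ne_top
    have h' := ENNReal.toReal_mono hfin h
    simp only [ENNReal.toReal_mul, ENNReal.toReal_natCast, ENNReal.toReal_div,
      ENNReal.toReal_ofNat, ENNReal.toReal_ofReal (by positivity : (0 : ℝ) ≤ (K : ℝ) ^ n)] at h'
    nlinarith
  have hlim : (S.card : ℝ) ≤ 16 / 9 * (L : ℝ) ^ n :=
    ge_of_tendsto
      (by fun_prop : Continuous fun K : ℝ≥0 => 16 / 9 * (K : ℝ) ^ n).continuousWithinAt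
      (eventually_nhdsWithin_of_forall (s := Ioi L) hcard)
  simpa using ENNReal.ofReal_le_ofReal hlim

theorem stmt11 {M N : Type*}
    [MetricSpace M] [MeasurableSpace M] [BorelSpace M] [CompactSpace M]
    [MetricSpace N] [MeasurableSpace N] [BorelSpace N] [CompactSpace N]
    (n : ℕ)
    [ChartedSpace (EuclideanSpace ℝ (Fin n)) M]
    [ChartedSpace (EuclideanSpace ℝ (Fin n)) N]
    (f : M → N) (L : ℝ≥0) (hf : LipschitzWith L f)
    (hvolpres : ∀ A : Set M, MeasurableSet A →
      (μH[n] : Measure N) (f '' A) = (μH[n] : Measure M) A)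
    (hinj : ∀ᵐ y ∂(μH[n] : Measure N), (f ⁻¹' {y}).encard ≤ 1)
    (r₀ : ℝ) (hr₀ : 0 < r₀)
    (hM : ∀ (x : M) (r : ℝ), 0 < r → r ≤ r₀ →
      (3 / 4 : ℝ≥0∞) * unitBallVolume n * ENNReal.ofReal (r ^ n)
        ≤ (μH[n] : Measure M) (Metric.ball x r))
    (hN : ∀ (y : N) (r : ℝ), 0 < r → r ≤ r₀ →
      (μH[n] : Measure N) (Metric.ball y r)
        ≤ (4 / 3 : ℝ≥0∞) * unitBallVolume n * ENNReal.ofReal (r ^ n)) :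
    ∀ y : N, ((f ⁻¹' {y}).encard : ℝ≥0∞) ≤ ENNReal.ofReal (16 / 9 * (L : ℝ) ^ n) :=
  stmt11_general n f L hf hvolpres r₀ hr₀ hM hN
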